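/- Let G be a group fitting in an exact sequence 1 → F → G → ℤ² → 1 with F finite. Then G is almost abelian; moreover if G is torsion-free then G contains a subgroup of finite index isomorphic to ℤ². -/

import Mathlib

/-!
Let `K` be the finite kernel and `C` its centralizer, of finite index `n` because `G` acts on `K`
through the finite group `MulAut K`. For `x y : G` the commutator `c = ⁅xⁿ, yⁿ⁆` lies in `K` (the
quotient is abelian) and commutes with `xⁿ ∈ C`, so conjugating `yⁿ` by `x ^ (n * k)` multiplies it
by `c ^ k = 1`, where `k = |K|`. Hence all `m`-th powers, `m = n * k`, commute pairwise and generate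
a normal abelian subgroup. Its image in the finitely generated abelian quotient contains every
`m`-th power, so has finite index, and since `K` is finite the subgroup itself has finite index.
In the torsion-free case `K` is trivial and `G ≃* ℤ²`.
-/

open Subgroup
open scoped commutatorElement

section

variable {G : Type*} [Group G]

theorem conj_pow_eq_commutatorElement_pow_mul {a b : G} (h : Commute a ⁅a, b⁆) (n : ℕ) :
    a ^ n * b * (a ^ n)⁻¹ = ⁅a, b⁆ ^ n * b := by
  induction n with
  | zero => simp
  | succ n ih =>
    calc a ^ (n + 1) * b * (a ^ (n + 1))⁻¹ = a * (a ^ n * b * (a ^ n)⁻¹) * a⁻¹ := by group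
      _ = a * ⁅a, b⁆ ^ n * a⁻¹ * (a * b * a⁻¹) := by rw [ih]; group
      _ = ⁅a, b⁆ ^ (n + 1) * b := by
        rw [(h.pow_right n).eq, mul_inv_cancel_right, ← MulAut.conj_apply,
          conj_eq_commutatorElement_mul, pow_succ, mul_assoc]

theorem commute_pow_of_commutatorElement_pow_eq_one {a b : G} {n : ℕ} (h : Commute a ⁅a, b⁆)
    (hn : ⁅a, b⁆ ^ n = 1) : Commute (a ^ n) b := by
  have := conj_pow_eq_commutatorElement_pow_mul h n
  rwa [hn, one_mul, mul_inv_eq_iff_eq_mul] at this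

theorem Subgroup.commute_pow_pow_of_commutator_le (F : Subgroup G) [F.Normal]
    (hF : _root_.commutator G ≤ F) (x y : G) :
    Commute (x ^ ((centralizer (F : Set G)).index * Nat.card F))
      (y ^ ((centralizer (F : Set G)).index * Nat.card F)) := by
  set n := (centralizer (F : Set G)).index
  have hx : x ^ n ∈ centralizer (F : Set G) := pow_index_mem _ x
  have hc : ⁅x ^ n, y ^ n⁆ ∈ F := hF (commutator_mem_commutator (mem_top _) (mem_top _))
  have hcomm : Commute (x ^ n) ⁅x ^ n, y ^ n⁆ := (mem_centralizer_iff.mp hx _ hc).symm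
  have hk : ⁅x ^ n, y ^ n⁆ ^ Nat.card F = 1 :=
    congrArg Subtype.val (pow_card_eq_one' (x := (⟨_, hc⟩ : F)))
  rw [pow_mul, pow_mul]
  exact (commute_pow_of_commutatorElement_pow_eq_one hcomm hk).pow_right _

theorem Subgroup.finiteIndex_centralizer_of_finite (F : Subgroup G) [F.Normal] [Finite F] :
    (centralizer (F : Set G)).FiniteIndex := by
  refine finiteIndex_of_le (H := (MulAut.conjNormal : G →* MulAut F).ker) fun g hg h hh => ?_
  have : ((MulAut.conjNormal g ⟨h, hh⟩ : F) : G) = h := by rw [hg]; rfl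
  rw [MulAut.conjNormal_apply, mul_inv_eq_iff_eq_mul] at this
  exact this.symm

theorem Group.conjugatesOfSet_range_pow (m : ℕ) :
    Group.conjugatesOfSet (Set.range (· ^ m : G → G)) = Set.range (· ^ m) := by
  refine Set.Subset.antisymm (fun x hx => ?_) Group.subset_conjugatesOfSet
  obtain ⟨_, ⟨y, rfl⟩, hconj⟩ := Group.mem_conjugatesOfSet_iff.mp hx
  obtain ⟨c, rfl⟩ := isConj_iff.mp hconj
  exact ⟨c * y * c⁻¹, conj_pow⟩

theorem Subgroup.isMulCommutative_normalClosure_range_pow {m : ℕ}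
    (h : ∀ x y : G, Commute (x ^ m) (y ^ m)) :
    IsMulCommutative (normalClosure (Set.range (· ^ m : G → G))) := by
  rw [normalClosure, Group.conjugatesOfSet_range_pow]
  refine isMulCommutative_closure ?_
  rintro _ ⟨x, rfl⟩ _ ⟨y, rfl⟩
  exact h x y

theorem Subgroup.index_ne_zero_of_index_map_ne_zero {Q : Type*} [Group Q] {H : Subgroup G}
    [H.Normal] {f : G →* Q} [Finite f.ker] (h : (H.map f).index ≠ 0) : H.index ≠ 0 := by
  rw [index_map] at h
  rw [← relIndex_mul_index (le_sup_left : H ≤ H ⊔ f.ker), relIndex_sup_left]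
  exact mul_ne_zero index_ne_zero_of_finite (left_ne_zero_of_mul h)

theorem Subgroup.index_ne_zero_of_forall_pow_mem {Q : Type*} [CommGroup Q] [Group.FG Q]
    {H : Subgroup Q} {m : ℕ} (hm : m ≠ 0) (h : ∀ y, y ^ m ∈ H) : H.index ≠ 0 := by
  have : Finite (Q ⧸ H) := CommGroup.finite_of_fg_isMulTorsion _ fun q => by
    induction q using QuotientGroup.induction_on with
    | H y => exact isOfFinOrder_iff_pow_eq_one.mpr
              ⟨m, Nat.pos_of_ne_zero hm, (QuotientGroup.eq_one_iff (y ^ m)).mpr (h y)⟩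
  exact index_ne_zero_of_finite

theorem exists_isMulCommutative_index_ne_zero_of_finite_ker {Q : Type*} [CommGroup Q]
    [Group.FG Q] (f : G →* Q) (hf : Function.Surjective f) [Finite f.ker] :
    ∃ A : Subgroup G, IsMulCommutative A ∧ A.index ≠ 0 := by
  have := f.ker.finiteIndex_centralizer_of_finite
  set m := (centralizer (f.ker : Set G)).index * Nat.card f.ker
  have hm : m ≠ 0 := mul_ne_zero FiniteIndex.index_ne_zero Nat.card_pos.ne'
  refine ⟨normalClosure (Set.range (· ^ m)), isMulCommutative_normalClosure_range_pow
    (f.ker.commute_pow_pow_of_commutator_le (Abelianization.commutator_subset_ker f)),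
    index_ne_zero_of_index_map_ne_zero (f := f) (index_ne_zero_of_forall_pow_mem hm fun y => ?_)⟩
  obtain ⟨x, rfl⟩ := hf y
  exact ⟨x ^ m, subset_normalClosure ⟨x, rfl⟩, map_pow f x m⟩

theorem Subgroup.eq_bot_of_finite_of_forall_not_isOfFinOrder (F : Subgroup G) [Finite F]
    (h : ∀ g : G, g ≠ 1 → ¬IsOfFinOrder g) : F = ⊥ :=
  eq_bot_iff.mpr fun x hx => by_contra fun hx1 =>
    h x hx1 (Submonoid.isOfFinOrder_coe.mpr (isOfFinOrder_of_finite (⟨x, hx⟩ : F)))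

end

/-- If 1 → F → G → ℤ² → 1 is exact with F finite, then G is almost abelian;
if moreover G is torsion-free, then G contains a finite-index subgroup
isomorphic to ℤ². -/
theorem almost_abelian_of_extension_by_Z2 {G : Type*} [Group G]
    (F : Subgroup G) [F.Normal] [Finite F]
    (e : (G ⧸ F) ≃* Multiplicative (ℤ × ℤ)) :
    (∃ A : Subgroup G, IsMulCommutative A ∧ A.index ≠ 0) ∧
      ((∀ g : G, g ≠ 1 → ¬IsOfFinOrder g) →
        ∃ H : Subgroup G, H.index ≠ 0 ∧
          Nonempty (H ≃* Multiplicative (ℤ × ℤ))) := by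
  refine ⟨?_, fun htf => ?_⟩
  · set φ := (e : G ⧸ F →* Multiplicative (ℤ × ℤ)).comp (QuotientGroup.mk' F)
    have : Finite φ.ker := by
      rw [MonoidHom.ker_mulEquiv_comp, QuotientGroup.ker_mk']
      infer_instance
    exact exists_isMulCommutative_index_ne_zero_of_finite_ker φ
      (e.surjective.comp (QuotientGroup.mk'_surjective F))
  · obtain rfl := F.eq_bot_of_finite_of_forall_not_isOfFinOrder htf
    exact ⟨⊤, by simp, ⟨topEquiv.trans (QuotientGroup.quotientBot.symm.trans e)⟩⟩
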